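/- arXiv:2203.03846 — 5 statements merged into one kernel-verified Lean document; each statement's English description precedes it below -/
import Mathlib

section
/- Let L be a traceless real 2×2 matrix such that U ↦ U^T [[0,1],[-1,0]] L U is positive definite. Then there exist unique k > 0 and τ in the upper half-plane (Im τ > 0) such that L = [[k·Re(τ)/Im(τ), -k/Im(τ)], [k·|τ|²/Im(τ), -k·Re(τ)/Im(τ)]]. Explicitly, writing L = [[a,b],[c,-a]], one has k = sqrt(-bc - a²), Re τ = -a/b, Im τ = -k/b. -/
/-!
The quadratic form `U ↦ Uᵀ J L U`, with `J = !![0, 1; -1, 0]`, is `c x² - 2a xy - b y²`, so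
positive definiteness gives `b < 0` and `det L = -bc - a² > 0`. The matrix attached to `(k, τ)`
has determinant `k²` and upper-right entry `-k / Im τ`, so `k = √(det L)`, `Im τ = -k / b` and
`Re τ = -a / b` are forced, and conversely these values reproduce `L`.
-/

open Matrix

noncomputable def tauMatrix (k : ℝ) (τ : ℂ) : Matrix (Fin 2) (Fin 2) ℝ :=
  !![k * τ.re / τ.im, -k / τ.im; k * Complex.normSq τ / τ.im, -k * τ.re / τ.im]

theorem tauMatrix_det (k : ℝ) {τ : ℂ} (hτ : τ.im ≠ 0) : (tauMatrix k τ).det = k ^ 2 := by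
  rw [tauMatrix, det_fin_two_of, Complex.normSq_apply]
  field_simp
  ring

theorem pos_and_sq_lt_of_forall_dotProduct_mulVec_pos {A : Matrix (Fin 2) (Fin 2) ℝ}
    (hA : ∀ U : Fin 2 → ℝ, U ≠ 0 → 0 < U ⬝ᵥ A *ᵥ U) :
    0 < A 1 1 ∧ (A 0 1 + A 1 0) ^ 2 < 4 * A 0 0 * A 1 1 := by
  have h11 : 0 < A 1 1 := by
    simpa [dotProduct, mulVec, Fin.sum_univ_two] using hA ![0, 1] (by simp [funext_iff])
  refine ⟨h11, ?_⟩
  -- the form takes the value `A₁₁ (4 A₀₀ A₁₁ - (A₀₁ + A₁₀)²)` at this vector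
  have hU := hA ![2 * A 1 1, -(A 0 1 + A 1 0)] (by simp [funext_iff, h11.ne'])
  simp [dotProduct, mulVec, Fin.sum_univ_two] at hU
  nlinarith

theorem tauMatrix_sqrt_eq {a b c : ℝ} (hb : b ≠ 0) (hdisc : 0 < -(b * c) - a ^ 2) :
    tauMatrix √(-(b * c) - a ^ 2) ⟨-a / b, -√(-(b * c) - a ^ 2) / b⟩ = !![a, b; c, -a] := by
  have hk : √(-(b * c) - a ^ 2) ≠ 0 := (Real.sqrt_pos.2 hdisc).ne'
  have hk2 := Real.sq_sqrt hdisc.le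
  rw [tauMatrix, Complex.normSq_mk]
  ext i j
  fin_cases i <;> fin_cases j <;> simp <;> field_simp
  linarith

theorem eq_of_eq_tauMatrix {a b c k : ℝ} {τ : ℂ} (hk : 0 < k) (hτ : 0 < τ.im)
    (h : !![a, b; c, -a] = tauMatrix k τ) :
    k = √(-(b * c) - a ^ 2) ∧ τ = ⟨-a / b, -√(-(b * c) - a ^ 2) / b⟩ := by
  have hdet : -(b * c) - a ^ 2 = k ^ 2 := by
    rw [← tauMatrix_det k hτ.ne', ← h, det_fin_two_of]; ring
  have hk_eq : k = √(-(b * c) - a ^ 2) := by rw [hdet, Real.sqrt_sq hk.le]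
  have ha : a = k * τ.re / τ.im := by simpa [tauMatrix] using congrFun (congrFun h 0) 0
  have hb : b = -k / τ.im := by simpa [tauMatrix] using congrFun (congrFun h 0) 1
  refine ⟨hk_eq, ?_⟩
  rw [← hk_eq, ha, hb]
  apply Complex.ext <;> field_simp

theorem existsUnique_eq_tauMatrix {a b c : ℝ} (hb : b < 0) (hdisc : 0 < -(b * c) - a ^ 2) :
    ∃! p : ℝ × ℂ, 0 < p.1 ∧ 0 < p.2.im ∧ !![a, b; c, -a] = tauMatrix p.1 p.2 := by
  refine ⟨(√(-(b * c) - a ^ 2), ⟨-a / b, -√(-(b * c) - a ^ 2) / b⟩),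
    ⟨Real.sqrt_pos.2 hdisc, div_pos_of_neg_of_neg (by simpa using hdisc) hb,
      (tauMatrix_sqrt_eq hb.ne hdisc).symm⟩, ?_⟩
  rintro ⟨k, τ⟩ ⟨hk, hτ, h⟩
  obtain ⟨rfl, rfl⟩ := eq_of_eq_tauMatrix hk hτ h
  rfl

theorem stmt_2 (a b c : ℝ) (L : Matrix (Fin 2) (Fin 2) ℝ)
    (hL : L = !![a, b; c, -a])
    (h : ∀ U : Fin 2 → ℝ, U ≠ 0 →
      0 < U ⬝ᵥ ((!![0, 1; -1, 0] * L).mulVec U)) :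
    (∃! p : ℝ × ℂ, 0 < p.1 ∧ 0 < p.2.im ∧
      L = !![p.1 * p.2.re / p.2.im, -p.1 / p.2.im;
             p.1 * Complex.normSq p.2 / p.2.im, -p.1 * p.2.re / p.2.im]) ∧
    (0 < Real.sqrt (-(b * c) - a ^ 2) ∧
      0 < (-Real.sqrt (-(b * c) - a ^ 2) / b) ∧
      L = !![Real.sqrt (-(b * c) - a ^ 2) * (-a / b) / (-Real.sqrt (-(b * c) - a ^ 2) / b),
             -Real.sqrt (-(b * c) - a ^ 2) / (-Real.sqrt (-(b * c) - a ^ 2) / b);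
             Real.sqrt (-(b * c) - a ^ 2) * ((-a / b) ^ 2 + (-Real.sqrt (-(b * c) - a ^ 2) / b) ^ 2) / (-Real.sqrt (-(b * c) - a ^ 2) / b),
             -Real.sqrt (-(b * c) - a ^ 2) * (-a / b) / (-Real.sqrt (-(b * c) - a ^ 2) / b)]) := by
  subst hL
  obtain ⟨hb, hdisc⟩ := pos_and_sq_lt_of_forall_dotProduct_mulVec_pos h
  replace hb : b < 0 := by simpa using hb
  replace hdisc : 0 < -(b * c) - a ^ 2 := by simp at hdisc; nlinarith
  refine ⟨existsUnique_eq_tauMatrix hb hdisc, Real.sqrt_pos.2 hdisc,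
    div_pos_of_neg_of_neg (by simpa using hdisc) hb, ?_⟩
  simpa [tauMatrix, Complex.normSq_mk, sq] using (tauMatrix_sqrt_eq hb.ne hdisc).symm
end

section
/- Let τ_c be in the upper half-plane and k_c > 0, and define L = [[k_c·Re(τ_c)/Im(τ_c), -k_c/Im(τ_c)], [k_c·|τ_c|²/Im(τ_c), -k_c·Re(τ_c)/Im(τ_c)]]. For τ in the upper half-plane, define E(τ) = (1/2)·⟨u, L u⟩_J + (1/2)·⟨v, L v⟩_J, where u = (1/√(Im τ), Re τ/√(Im τ)), v = (0, Im τ/√(Im τ)), and ⟨(A,B), (Ã,B̃)⟩_J := A·B̃ - B·Ã applied as ⟨w, Lw⟩_J. Then E(τ) = k_c·|τ - τ_c|²/(2·Im(τ_c)·Im(τ)) + k_c. Consequently E(τ) ≥ k_c with equality if and only if τ = τ_c. -/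
open Matrix

/-
The pairing ⟨w, L w⟩_J of any 2 × 2 matrix is a binary quadratic form in w; for the given L it is
(k_c / Im τ_c) · (|τ_c|² A² - 2 Re τ_c · A B + B²). Evaluated at u and v and summed, this gives
k_c (|τ|² - 2 Re τ Re τ_c + |τ_c|²) / (2 Im τ_c Im τ) = k_c (|τ - τ_c|² + 2 Im τ Im τ_c) / (2 Im τ_c Im τ),
and the remaining claims follow because the first summand is nonnegative and vanishes only at τ = τ_c.
-/

theorem symplectic_mulVec_self (L : Matrix (Fin 2) (Fin 2) ℝ) (w : Fin 2 → ℝ) :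
    w 0 * L.mulVec w 1 - w 1 * L.mulVec w 0 =
      L 1 0 * w 0 ^ 2 + (L 1 1 - L 0 0) * w 0 * w 1 - L 0 1 * w 1 ^ 2 := by
  simp only [mulVec, dotProduct, Fin.sum_univ_two]
  ring

noncomputable def hamiltonianMatrix (kc : ℝ) (τc : ℂ) : Matrix (Fin 2) (Fin 2) ℝ :=
  !![kc * τc.re / τc.im, -kc / τc.im; kc * Complex.normSq τc / τc.im, -kc * τc.re / τc.im]

theorem symplectic_hamiltonianMatrix_mulVec_self (kc : ℝ) (τc : ℂ) (w : Fin 2 → ℝ) :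
    w 0 * (hamiltonianMatrix kc τc).mulVec w 1 - w 1 * (hamiltonianMatrix kc τc).mulVec w 0 =
      kc / τc.im * (Complex.normSq τc * w 0 ^ 2 - 2 * τc.re * w 0 * w 1 + w 1 ^ 2) := by
  rw [symplectic_mulVec_self]
  simp only [hamiltonianMatrix, of_apply, cons_val', cons_val_zero, cons_val_one, empty_val',
    cons_val_fin_one]
  ring

theorem half_sum_quadForm_eq (kc : ℝ) (τc τ : ℂ) (hτc : 0 < τc.im) (hτ : 0 < τ.im) :
    kc / τc.im * (Complex.normSq τc * (1 / √τ.im) ^ 2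
        - 2 * τc.re * (1 / √τ.im) * (τ.re / √τ.im) + (τ.re / √τ.im) ^ 2) / 2
      + kc / τc.im * (τ.im / √τ.im) ^ 2 / 2
      = kc * ‖τ - τc‖ ^ 2 / (2 * τc.im * τ.im) + kc := by
  have hsq : √τ.im ^ 2 = τ.im := Real.sq_sqrt hτ.le
  rw [Complex.sq_norm, Complex.normSq_apply, Complex.normSq_apply, div_pow, div_pow, div_pow, hsq]
  simp only [Complex.sub_re, Complex.sub_im]
  field_simp
  linear_combination 2 * kc * τc.re * τ.re * hsq

theorem self_le_div_add_self_and_eq_iff (kc b y : ℝ) (z : ℂ) (hkc : 0 < kc) (hb : 0 < b)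
    (hy : 0 < y) :
    kc ≤ kc * ‖z‖ ^ 2 / (2 * b * y) + kc ∧ (kc * ‖z‖ ^ 2 / (2 * b * y) + kc = kc ↔ z = 0) := by
  refine ⟨le_add_of_nonneg_left (by positivity), ?_⟩
  rw [add_eq_right, div_eq_zero_iff, mul_eq_zero, pow_eq_zero_iff two_ne_zero, norm_eq_zero]
  constructor
  · rintro ((h | h) | h)
    · exact absurd h hkc.ne'
    · exact h
    · exact absurd h (by positivity)
  · exact fun h => Or.inl (Or.inr h)

theorem stmt_3 (kc : ℝ) (τc : ℂ) (hkc : 0 < kc) (hτc : 0 < τc.im)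
    (L : Matrix (Fin 2) (Fin 2) ℝ)
    (hL : L = !![kc * τc.re / τc.im, -kc / τc.im;
                 kc * Complex.normSq τc / τc.im, -kc * τc.re / τc.im])
    (τ : ℂ) (hτ : 0 < τ.im)
    (u v : Fin 2 → ℝ)
    (hu : u = ![1 / Real.sqrt τ.im, τ.re / Real.sqrt τ.im])
    (hv : v = ![0, τ.im / Real.sqrt τ.im])
    (Eτ : ℝ)
    (hE : Eτ = (1 / 2) * (u 0 * L.mulVec u 1 - u 1 * L.mulVec u 0)
             + (1 / 2) * (v 0 * L.mulVec v 1 - v 1 * L.mulVec v 0)) :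
    Eτ = kc * ‖τ - τc‖ ^ 2 / (2 * τc.im * τ.im) + kc ∧
    kc ≤ Eτ ∧ (Eτ = kc ↔ τ = τc) := by
  have hEτ : Eτ = kc * ‖τ - τc‖ ^ 2 / (2 * τc.im * τ.im) + kc := by
    change L = hamiltonianMatrix kc τc at hL
    rw [hE, hL, symplectic_hamiltonianMatrix_mulVec_self, symplectic_hamiltonianMatrix_mulVec_self,
      ← half_sum_quadForm_eq kc τc τ hτc hτ, hu, hv]
    simp only [cons_val_zero, cons_val_one]
    ring
  obtain ⟨hle, heq⟩ := self_le_div_add_self_and_eq_iff kc τc.im τ.im (τ - τc) hkc hτc hτ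
  exact ⟨hEτ, hEτ ▸ hle, by rw [hEτ, heq, sub_eq_zero]⟩
end

section
/- Under the non-degeneracy assumption on edge weights c : E → ℝ (the energy is positive definite on closed 1-forms), for every (A, B) ∈ ℝ² there exists a unique harmonic 1-form ω with periods Σ_{γ₁} ω = A and Σ_{γ₂} ω = B. -/
/-!
The codifferential `δ ω = dᵀ (c ω)` has rank at most `rank d < |V|`, since constants lie in the
kernel of `d`. Harmonic forms, the kernel of `δ` on the `(|V| + 1)`-dimensional space of closed
forms, therefore form a space of dimension at least 2. A harmonic form with vanishing periods is
exact, `ω = d f`, so its energy `Σ c ω² = ⟨c ω, d f⟩ = ⟨δ ω, f⟩` vanishes and `ω = 0`. Hence the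
period map from harmonic forms to `ℝ²` is injective, and by dimension bijective.
-/

open Matrix Module

theorem Submodule.finrank_le_finrank_inf_ker_add_finrank_range {K M N : Type*} [DivisionRing K]
    [AddCommGroup M] [Module K M] [FiniteDimensional K M] [AddCommGroup N] [Module K N]
    (C : Submodule K M) (f : M →ₗ[K] N) :
    finrank K C ≤ finrank K ↥(C ⊓ LinearMap.ker f) + finrank K (LinearMap.range f) := by
  have hsup := Submodule.finrank_sup_add_finrank_inf_eq C (LinearMap.ker f)
  have hf := f.finrank_range_add_finrank_ker
  have hle := (C ⊔ LinearMap.ker f).finrank_le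
  omega

theorem LinearMap.existsUnique_mem_and_apply_eq_of_disjoint_ker {K M N : Type*} [Field K]
    [AddCommGroup M] [Module K M] [AddCommGroup N] [Module K N] [FiniteDimensional K N]
    {f : M →ₗ[K] N} {H : Submodule K M} (hH : Disjoint H (LinearMap.ker f))
    (hdim : finrank K N ≤ finrank K H) (y : N) : ∃! x, x ∈ H ∧ f x = y := by
  have hinj : Function.Injective (f.domRestrict H) := by
    rw [← LinearMap.ker_eq_bot, LinearMap.ker_domRestrict]
    exact Submodule.disjoint_iff_comap_eq_bot.mp hH
  have : FiniteDimensional K H := .of_injective _ hinj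
  have hsurj : Function.Surjective (f.domRestrict H) :=
    (LinearMap.injective_iff_surjective_of_finrank_eq_finrank
      (hdim.antisymm' (LinearMap.finrank_le_finrank_of_injective hinj))).mp hinj
  obtain ⟨⟨x, hxH⟩, rfl⟩ := hsurj y
  exact ⟨x, ⟨hxH, rfl⟩, fun x' ⟨hx'H, hx'⟩ => congrArg Subtype.val (@hinj ⟨x', hx'H⟩ ⟨x, hxH⟩ hx')⟩

theorem Matrix.rank_lt_card_width_of_mulVec_eq_zero {K m n : Type*} [Field K] [Fintype n]
    {A : Matrix m n K} {v : n → K} (hv : v ≠ 0) (hAv : A *ᵥ v = 0) :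
    A.rank < Fintype.card n := by
  have h := A.mulVecLin.finrank_range_add_finrank_ker
  have hker : 0 < finrank K (LinearMap.ker A.mulVecLin) :=
    finrank_pos_iff_exists_ne_zero.mpr ⟨⟨v, hAv⟩, by simpa [Subtype.ext_iff] using hv⟩
  rw [finrank_fintype_fun_eq_card] at h
  exact Nat.lt_of_lt_of_eq (Nat.lt_add_of_pos_right hker) h

theorem Matrix.sum_mul_sq_eq_zero_of_transpose_mulVec_mul_eq_zero {R m n : Type*} [CommRing R]
    [Fintype m] [Fintype n] {d : Matrix m n R} {c ω : m → R} (hω : dᵀ *ᵥ (c * ω) = 0)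
    {f : n → R} (hexact : ω = d *ᵥ f) : ∑ e, c e * ω e ^ 2 = 0 :=
  calc ∑ e, c e * ω e ^ 2 = (c * ω) ⬝ᵥ d *ᵥ f := by
        rw [← hexact]; simp only [dotProduct, Pi.mul_apply, sq, mul_assoc]
    _ = 0 := by rw [dotProduct_mulVec, ← mulVec_transpose, hω, zero_dotProduct]

theorem stmt_13_general (V E : Type) [Fintype V] [Fintype E]
    (head : E → V)
    (d : Matrix E V ℝ)
    -- the submodule of closed 1-forms, of dimension |V| + 1
    (Closed : Submodule ℝ (E → ℝ))
    (hdim : Module.finrank ℝ Closed = Fintype.card V + 1)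
    -- connectedness: only constant functions have vanishing differential
    (hconn : ∀ f : V → ℝ, d.mulVec f = 0 ↔ ∃ r : ℝ, f = Function.const V r)
    -- the period maps along the generators γ₁, γ₂
    (p1 p2 : (E → ℝ) →ₗ[ℝ] ℝ)
    -- a closed 1-form with vanishing periods is exact
    (hper : ∀ ω ∈ Closed, p1 ω = 0 → p2 ω = 0 → ∃ f : V → ℝ, ω = d.mulVec f)
    -- edge weights, non-degenerate on closed 1-forms
    (c : E → ℝ)
    (hdef : ∀ ω ∈ Closed, ∑ e : E, c e * ω e ^ 2 = 0 → ω = 0) :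
    ∀ A B : ℝ, ∃! ω : E → ℝ,
      ω ∈ Closed ∧ dᵀ.mulVec (fun e => c e * ω e) = 0 ∧ p1 ω = A ∧ p2 ω = B := by
  intro A B
  obtain ⟨e⟩ : Nonempty E := by
    have hClosed := Closed.finrank_le
    rw [finrank_fintype_fun_eq_card, hdim] at hClosed
    exact Fintype.card_pos_iff.mp (by omega)
  have : Nonempty V := ⟨head e⟩
  have hrank : d.rank < Fintype.card V :=
    rank_lt_card_width_of_mulVec_eq_zero one_ne_zero ((hconn 1).mpr ⟨1, rfl⟩)
  let δ := dᵀ.mulVecLin ∘ₗ LinearMap.mulLeft ℝ c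
  have hharmonic : 2 ≤ finrank ℝ ↥(Closed ⊓ LinearMap.ker δ) := by
    have hδ : finrank ℝ (LinearMap.range δ) ≤ d.rank :=
      (Submodule.finrank_mono (LinearMap.range_comp_le_range _ _)).trans_eq (rank_transpose d)
    have := Closed.finrank_le_finrank_inf_ker_add_finrank_range δ
    omega
  have hperiods : Disjoint (Closed ⊓ LinearMap.ker δ) (LinearMap.ker (p1.prod p2)) := by
    rw [Submodule.disjoint_def]
    rintro ω ⟨hω, hδω⟩ hp
    obtain ⟨f, rfl⟩ := hper ω hω (congrArg Prod.fst hp) (congrArg Prod.snd hp)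
    exact hdef _ hω (sum_mul_sq_eq_zero_of_transpose_mulVec_mul_eq_zero hδω rfl)
  have hδ (ω : E → ℝ) : δ ω = dᵀ *ᵥ fun e => c e * ω e := rfl
  simpa only [Submodule.mem_inf, LinearMap.mem_ker, hδ, LinearMap.prod_apply, Function.prod_apply,
    Prod.mk.injEq, and_assoc] using
    LinearMap.existsUnique_mem_and_apply_eq_of_disjoint_ker hperiods
      (by rwa [finrank_prod, finrank_self]) (A, B)

/-- Under non-degenerate edge weights, for every period vector (A,B)
there exists a unique harmonic 1-form with those periods. -/
theorem stmt_13 (V E : Type) [Fintype V] [Fintype E] [DecidableEq V]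
    (head tail : E → V)
    (d : Matrix E V ℝ)
    (hd : d = Matrix.of fun e v => (if head e = v then (1 : ℝ) else 0) - (if tail e = v then 1 else 0))
    -- the submodule of closed 1-forms, of dimension |V| + 1
    (Closed : Submodule ℝ (E → ℝ))
    (hdim : Module.finrank ℝ Closed = Fintype.card V + 1)
    -- exact 1-forms are closed
    (hexact : ∀ f : V → ℝ, d.mulVec f ∈ Closed)
    -- connectedness: only constant functions have vanishing differential
    (hconn : ∀ f : V → ℝ, d.mulVec f = 0 ↔ ∃ r : ℝ, f = Function.const V r)
    -- the period maps along the generators γ₁, γ₂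
    (p1 p2 : (E → ℝ) →ₗ[ℝ] ℝ)
    -- exact forms have vanishing periods
    (hp1 : ∀ f : V → ℝ, p1 (d.mulVec f) = 0) (hp2 : ∀ f : V → ℝ, p2 (d.mulVec f) = 0)
    -- a closed 1-form with vanishing periods is exact
    (hper : ∀ ω ∈ Closed, p1 ω = 0 → p2 ω = 0 → ∃ f : V → ℝ, ω = d.mulVec f)
    -- edge weights, non-degenerate on closed 1-forms
    (c : E → ℝ)
    (hnonneg : ∀ ω ∈ Closed, 0 ≤ ∑ e : E, c e * ω e ^ 2)
    (hdef : ∀ ω ∈ Closed, ∑ e : E, c e * ω e ^ 2 = 0 → ω = 0) :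
    ∀ A B : ℝ, ∃! ω : E → ℝ,
      ω ∈ Closed ∧ dᵀ.mulVec (fun e => c e * ω e) = 0 ∧ p1 ω = A ∧ p2 ω = B :=
  stmt_13_general V E head d Closed hdim hconn p1 p2 hper c hdef
end

section
/- Let L : ℝ² → ℝ² be the response matrix sending the periods (A,B) of a harmonic 1-form ω to the periods (Ã,B̃) of its conjugate *ω = cω. Then for any two harmonic 1-forms ω, ω̃ with periods (A,B) and (Ã',B̃'), one has Σ_{ij} c_{ij} ω_{ij} ω̃_{ij} = {(A,B), L(Ã',B̃')} = {(Ã',B̃'), L(A,B)}, where {(A,B),(C,D)} = AD - BC. In particular the bilinear form ((A,B),(C,D)) ↦ {(A,B), L(C,D)} is symmetric. -/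
open Matrix

theorem keylem (E V F : Type) [Fintype V] [Fintype E] [Fintype F]
  (d : Matrix E V ℝ) (dstar : Matrix E F ℝ)
  (m1 m2 n1 n2 : E → ℝ) (hm1 : dstarᵀ.mulVec m1 = 0) (hm2 : dstarᵀ.mulVec m2 = 0)
  (h11 : ∑ e : E, m1 e * n1 e = 0) (h12 : ∑ e : E, m1 e * n2 e = 1)
  (h21 : ∑ e : E, m2 e * n1 e = -1) (h22 : ∑ e : E, m2 e * n2 e = 0)
  (μ : E → ℝ) (f : V → ℝ) (P Q : ℝ) (hμ : μ = d.mulVec f + P • m1 + Q • m2)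
  (η : E → ℝ) (g : F → ℝ) (C D : ℝ) (hη : η = dstar.mulVec g + C • n1 + D • n2)
  (hco : dᵀ.mulVec η = 0) :
  ∑ e : E, μ e * η e = P * D - Q * C := by
  have hdf : (d.mulVec f) ⬝ᵥ η = 0 := by
    rw [dotProduct_comm, dotProduct_mulVec, ← mulVec_transpose, hco, zero_dotProduct]
  have hm : ∀ m : E → ℝ, dstarᵀ.mulVec m = 0 → m ⬝ᵥ (dstar.mulVec g) = 0 := by
    intro m hm
    rw [dotProduct_mulVec, ← mulVec_transpose, hm, zero_dotProduct]
  have h1 : m1 ⬝ᵥ η = D := by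
    rw [hη, dotProduct_add, dotProduct_add, dotProduct_smul, dotProduct_smul,
      hm m1 hm1]
    show 0 + C • (∑ e : E, m1 e * n1 e) + D • (∑ e : E, m1 e * n2 e) = D
    rw [h11, h12]; simp
  have h2 : m2 ⬝ᵥ η = -C := by
    rw [hη, dotProduct_add, dotProduct_add, dotProduct_smul, dotProduct_smul,
      hm m2 hm2]
    show 0 + C • (∑ e : E, m2 e * n1 e) + D • (∑ e : E, m2 e * n2 e) = -C
    rw [h21, h22]; simp
  have : μ ⬝ᵥ η = P * D - Q * C := by
    rw [hμ, add_dotProduct, add_dotProduct, smul_dotProduct, smul_dotProduct,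
      hdf, h1, h2]
    simp only [smul_eq_mul]; ring
  simpa [dotProduct] using this

/-- the response matrix L, sending the periods (A,B) of a harmonic
1-form ω to the periods of its conjugate *ω = cω, satisfies
Σ c ω ω̃ = {(A,B), L(A',B')} = {(A',B'), L(A,B)} for harmonic ω, ω̃; in particular
the bilinear form ((A,B),(C,D)) ↦ {(A,B), L(C,D)} is symmetric.
Here {(A,B),(C,D)} = A·D - B·C is the standard symplectic form. -/
theorem stmt_15 (V E F : Type) [Fintype V] [Fintype E] [Fintype F]
    [DecidableEq V] [DecidableEq F]
    (head tail : E → V) (left right : E → F)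
    (d : Matrix E V ℝ)
    (hd : d = Matrix.of fun e v => (if head e = v then (1 : ℝ) else 0) - (if tail e = v then 1 else 0))
    (dstar : Matrix E F ℝ)
    (hdstar : dstar = Matrix.of fun e φ => (if left e = φ then (1 : ℝ) else 0) - (if right e = φ then 1 else 0))
    -- m1, m2: closed 1-forms with periods (1,0) and (0,1) along γ₁, γ₂
    (m1 m2 : E → ℝ) (hm1 : dstarᵀ.mulVec m1 = 0) (hm2 : dstarᵀ.mulVec m2 = 0)
    -- n1, n2: co-closed 1-forms with dual periods (1,0) and (0,1)
    (n1 n2 : E → ℝ) (hn1 : dᵀ.mulVec n1 = 0) (hn2 : dᵀ.mulVec n2 = 0)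
    -- intersection normalization of the basis forms
    (h11 : ∑ e : E, m1 e * n1 e = 0) (h12 : ∑ e : E, m1 e * n2 e = 1)
    (h21 : ∑ e : E, m2 e * n1 e = -1) (h22 : ∑ e : E, m2 e * n2 e = 0)
    -- edge weights
    (c : E → ℝ)
    -- L is the response matrix: it maps the periods of a harmonic 1-form to the
    -- dual periods of its conjugate c·ω
    (L : Matrix (Fin 2) (Fin 2) ℝ)
    (hL : ∀ (ω : E → ℝ) (A B : ℝ),
      dstarᵀ.mulVec ω = 0 →
      (∃ f : V → ℝ, ω = d.mulVec f + A • m1 + B • m2) →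
      dᵀ.mulVec (fun e => c e * ω e) = 0 →
      ∃ g : F → ℝ, (fun e => c e * ω e) =
        dstar.mulVec g + (L.mulVec ![A, B] 0) • n1 + (L.mulVec ![A, B] 1) • n2)
    -- two harmonic 1-forms with periods (A,B) and (A',B')
    (ω ωt : E → ℝ) (A B A' B' : ℝ)
    (hω : dstarᵀ.mulVec ω = 0)
    (hωdec : ∃ f : V → ℝ, ω = d.mulVec f + A • m1 + B • m2)
    (hωco : dᵀ.mulVec (fun e => c e * ω e) = 0)
    (hωt : dstarᵀ.mulVec ωt = 0)
    (hωtdec : ∃ f : V → ℝ, ωt = d.mulVec f + A' • m1 + B' • m2)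
    (hωtco : dᵀ.mulVec (fun e => c e * ωt e) = 0) :
    ∑ e : E, c e * ω e * ωt e = A * L.mulVec ![A', B'] 1 - B * L.mulVec ![A', B'] 0 ∧
    ∑ e : E, c e * ω e * ωt e = A' * L.mulVec ![A, B] 1 - B' * L.mulVec ![A, B] 0 := by
  obtain ⟨g, hg⟩ := hL ωt A' B' hωt hωtdec hωtco
  obtain ⟨g', hg'⟩ := hL ω A B hω hωdec hωco
  obtain ⟨f, hf⟩ := hωdec
  obtain ⟨ft, hft⟩ := hωtdec
  constructor
  · have := keylem E V F d dstar m1 m2 n1 n2 hm1 hm2 h11 h12 h21 h22 ω f A B hf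
      (fun e => c e * ωt e) g (L.mulVec ![A', B'] 0) (L.mulVec ![A', B'] 1) hg hωtco
    rw [← this]
    exact Finset.sum_congr rfl fun e _ => by ring
  · have := keylem E V F d dstar m1 m2 n1 n2 hm1 hm2 h11 h12 h21 h22 ωt ft A' B' hft
      (fun e => c e * ω e) g' (L.mulVec ![A, B] 0) (L.mulVec ![A, B] 1) hg' hωco
    rw [← this]
    exact Finset.sum_congr rfl fun e _ => by ring
end

section
/- Let τ, τ_c be in the upper half-plane and k, k_c > 0. Suppose the complex numbers P₁ = (k_c/√(Im τ_c))·(√(Im τ/Im τ_c) + i·(Re τ_c - Re τ)/√(Im τ_c · Im τ)) and P₂ = (k_c/√(Im τ_c))·(Im τ · Re τ_c/Im τ_c + i·(|τ_c|² - Re τ_c·Re τ)/Im τ_c) satisfy P₁ = k/√(Im τ) and P₂ = k·τ/√(Im τ). Then τ = τ_c and k = k_c. -/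
/-!
The imaginary part of `P₁ = k / √(Im τ)` forces `Re τ = Re τ_c`, and then `|τ_c|² - (Re τ_c)² = (Im τ_c)²`
turns the imaginary part of `P₂ = k τ / √(Im τ)` into `k_c √(Im τ_c) = k √(Im τ)`. Together with the real part
of the first equation, `k_c Im τ = k Im τ_c`, eliminating `k` gives `(Im τ)³ = (Im τ_c)³`.
-/

lemma eq_of_mul_eq_mul_of_sq_mul_eq_sq_mul {α : Type*} [Field α] [LinearOrder α] [IsStrictOrderedRing α]
    {a b k kc : α} (ha : 0 ≤ a) (hb : 0 ≤ b) (hkc : kc ≠ 0)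
    (h₁ : kc * a = k * b) (h₂ : kc ^ 2 * b = k ^ 2 * a) : a = b := by
  have hcube : kc ^ 2 * b ^ 3 = kc ^ 2 * a ^ 3 := by
    linear_combination b ^ 2 * h₂ - a * (k * b + kc * a) * h₁
  exact ((pow_left_inj₀ hb ha (by norm_num)).1 (mul_left_cancel₀ (pow_ne_zero 2 hkc) hcube)).symm

lemma mul_eq_mul_of_div_sqrt_mul_sqrt_div_eq {a b k kc : ℝ} (ha : 0 < a) (hb : 0 < b)
    (h : kc / √b * √(a / b) = k / √a) : kc * a = k * b := by
  rw [Real.sqrt_div ha.le, div_mul_div_comm, ← sq, Real.sq_sqrt hb.le,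
    div_eq_div_iff hb.ne' (Real.sqrt_pos.2 ha).ne', mul_assoc, Real.mul_self_sqrt ha.le] at h
  exact h

lemma div_sqrt_mul_self (x y : ℝ) : y / √x * x = y * √x := by
  rw [div_mul_eq_mul_div, mul_div_assoc, Real.div_sqrt]

theorem stmt_16_general (τ τc : ℂ) (k kc : ℝ)
    (hτ : 0 < τ.im) (hτc : 0 < τc.im) (hkc : 0 < kc)
    (P1 P2 : ℂ)
    (hP1 : P1 = ((kc / Real.sqrt τc.im : ℝ) : ℂ) *
      (((Real.sqrt (τ.im / τc.im) : ℝ) : ℂ) +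
        Complex.I * (((τc.re - τ.re) / Real.sqrt (τc.im * τ.im) : ℝ) : ℂ)))
    (hP2 : P2 = ((kc / Real.sqrt τc.im : ℝ) : ℂ) *
      (((τ.im * τc.re / τc.im : ℝ) : ℂ) +
        Complex.I * (((Complex.normSq τc - τc.re * τ.re) / τc.im : ℝ) : ℂ)))
    (h1 : P1 = ((k / Real.sqrt τ.im : ℝ) : ℂ))
    (h2 : P2 = ((k / Real.sqrt τ.im : ℝ) : ℂ) * τ) :
    τ = τc ∧ k = kc := by
  have hP1re := congrArg Complex.re (hP1.symm.trans h1)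
  have hP1im := congrArg Complex.im (hP1.symm.trans h1)
  have hP2im := congrArg Complex.im (hP2.symm.trans h2)
  simp only [Complex.mul_re, Complex.mul_im, Complex.add_re, Complex.add_im, Complex.ofReal_re,
    Complex.ofReal_im, Complex.I_re, Complex.I_im, mul_zero, zero_mul, one_mul, add_zero,
    zero_add, sub_zero] at hP1re hP1im hP2im
  have hre : τ.re = τc.re := by
    have hcoef : kc / √τc.im ≠ 0 := by positivity
    have hsqrt : √(τc.im * τ.im) ≠ 0 := by positivity
    have hdiff := (mul_eq_zero.1 hP1im).resolve_left hcoef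
    rw [div_eq_zero_iff, sub_eq_zero] at hdiff
    exact (hdiff.resolve_right hsqrt).symm
  have h₁ : kc * τ.im = k * τc.im := mul_eq_mul_of_div_sqrt_mul_sqrt_div_eq hτ hτc hP1re
  have h₂ : kc ^ 2 * τc.im = k ^ 2 * τ.im := by
    have hnormSq : Complex.normSq τc - τc.re * τc.re = τc.im * τc.im := by
      rw [Complex.normSq_apply]; ring
    rw [hre, hnormSq, mul_div_cancel_right₀ _ hτc.ne', div_sqrt_mul_self, div_sqrt_mul_self]
      at hP2im
    rw [← Real.sq_sqrt hτc.le, ← Real.sq_sqrt hτ.le, ← mul_pow, ← mul_pow, hP2im]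
  have him : τ.im = τc.im := eq_of_mul_eq_mul_of_sq_mul_eq_sq_mul hτ.le hτc.le hkc.ne' h₁ h₂
  rw [him] at h₁
  exact ⟨Complex.ext hre him, (mul_right_cancel₀ hτc.ne' h₁).symm⟩

theorem stmt_16 (τ τc : ℂ) (k kc : ℝ)
    (hτ : 0 < τ.im) (hτc : 0 < τc.im) (hk : 0 < k) (hkc : 0 < kc)
    (P1 P2 : ℂ)
    (hP1 : P1 = ((kc / Real.sqrt τc.im : ℝ) : ℂ) *
      (((Real.sqrt (τ.im / τc.im) : ℝ) : ℂ) +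
        Complex.I * (((τc.re - τ.re) / Real.sqrt (τc.im * τ.im) : ℝ) : ℂ)))
    (hP2 : P2 = ((kc / Real.sqrt τc.im : ℝ) : ℂ) *
      (((τ.im * τc.re / τc.im : ℝ) : ℂ) +
        Complex.I * (((Complex.normSq τc - τc.re * τ.re) / τc.im : ℝ) : ℂ)))
    (h1 : P1 = ((k / Real.sqrt τ.im : ℝ) : ℂ))
    (h2 : P2 = ((k / Real.sqrt τ.im : ℝ) : ℂ) * τ) :
    τ = τc ∧ k = kc :=
  stmt_16_general τ τc k kc hτ hτc hkc P1 P2 hP1 hP2 h1 h2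
end
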